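/- Let r ≥ 2 and let L = ∂_x^r + c·x be the pseudo-differential operator over the differential ring ℂ[ε, ε^{−1}][x] with c = ε^{−r} r, where ∂(x) = 1. Then the unique r-th root L^{1/r} = ∂_x + Σ_{n ≥ 0} b_n ∂_x^{−n} satisfies b_0 = 0, b_1 = ⋯ = b_{r−2} = 0, b_{r−1} = ε^{−r} x, and b_r = −((r−1)/2) ε^{−r}. -/

import Mathlib

/-!
Write `B = ∂ₓ + Σ_{j ≤ 0} b_j ∂ₓ^j`. Since `∂ₓ ∘ P = P ∂ₓ + P'`, induction on `m` shows: if
`b_0 = ⋯ = b_{1-s} = 0`, then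
`B^m = ∂ₓ^m + m b_{-s} ∂ₓ^{m-s-1} + (m b_{-s-1} + C(m,2) b_{-s}') ∂ₓ^{m-s-2} + ⋯`.
As `L = ∂ₓ^r + c x` has no terms of order `1, …, r-1`, taking `m = r` kills `b_0, …, b_{2-r}`
one after the other; then `r b_{1-r} = c x` and `r b_{-r} + C(r,2) b_{1-r}' = 0`.
-/

open Finset

/-- The generalized binomial coefficient `k(k−1)⋯(k−l+1)/l!` for `k : ℤ`. -/
def genBinom (k : ℤ) (l : ℕ) : ℚ :=
  (∏ i ∈ Finset.range l, ((k : ℚ) - (i : ℚ))) / (Nat.factorial l : ℚ)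

/-- A pseudo-differential operator `Σ_{n ≤ bound} a_n ∂ₓ^n` with coefficients in `R`:
a family of coefficients `a_n` indexed by `n : ℤ`, vanishing above some bound. -/
structure PDO (R : Type*) [CommRing R] where
  coeff : ℤ → R
  bound : ℤ
  coeff_eq_zero : ∀ n : ℤ, bound < n → coeff n = 0

variable {R : Type*} [CommRing R] [Algebra ℚ R]

/-- The coefficient of `∂ₓ^n` in the composition `A ∘ B`, determined by the generalized
Leibniz rule `∂ₓ^k ∘ f = Σ_{l ≥ 0} (k(k−1)⋯(k−l+1)/l!)(∂^l f) ∂ₓ^{k−l}` together with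
bilinearity and continuity: the terms `a_k · (k…(k−l+1)/l!) ∂^l(b_j)` with
`k − l + j = n` are parametrized by `k = n − B.bound + p` and `l ≤ p`. -/
def pdoCompCoeff (D : Derivation ℚ R R) (A B : PDO R) (n : ℤ) : R :=
  ∑ p ∈ Finset.range (A.bound + B.bound + 1 - n).toNat,
    ∑ l ∈ Finset.range (p + 1),
      A.coeff (n - B.bound + p) *
        (genBinom (n - B.bound + p) l • (⇑D)^[l] (B.coeff (B.bound - p + l)))

/-- Composition of pseudo-differential operators. -/
def pdoComp (D : Derivation ℚ R R) (A B : PDO R) : PDO R where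
  coeff := pdoCompCoeff D A B
  bound := A.bound + B.bound
  coeff_eq_zero := by
    intro n hn
    have h : (A.bound + B.bound + 1 - n).toNat = 0 := by omega
    simp [pdoCompCoeff, h]

/-- The pseudo-differential operator `∂ₓ^k`. -/
def pdoDelta (k : ℤ) : PDO R where
  coeff := fun n => if n = k then 1 else 0
  bound := k
  coeff_eq_zero := by
    intro n hn
    try dsimp only
    rw [if_neg (by omega)]

/-- The identity pseudo-differential operator `1 = ∂ₓ^0`. -/
def pdoOne : PDO R := pdoDelta 0

/-- Iterated composition power `A^n` of a pseudo-differential operator. -/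
def pdoNpow (D : Derivation ℚ R R) (A : PDO R) : ℕ → PDO R
  | 0 => pdoOne
  | n + 1 => pdoComp D A (pdoNpow D A n)

/-- The differential-operator part `A₊ = Σ_{n ≥ 0} a_n ∂ₓ^n`. -/
def pdoPlus (A : PDO R) : PDO R where
  coeff := fun n => if 0 ≤ n then A.coeff n else 0
  bound := max A.bound 0
  coeff_eq_zero := by
    intro n hn
    try dsimp only
    by_cases h : 0 ≤ n
    · rw [if_pos h]; exact A.coeff_eq_zero n (by omega)
    · rw [if_neg h]

/-- The purely negative part `A₋ = A − A₊ = Σ_{n ≤ −1} a_n ∂ₓ^n`. -/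
def pdoMinus (A : PDO R) : PDO R where
  coeff := fun n => if n < 0 then A.coeff n else 0
  bound := -1
  coeff_eq_zero := by
    intro n hn
    try dsimp only
    rw [if_neg (by omega)]


/-- The coefficient ring `ℂ[ε, ε^{−1}][x]`. -/
abbrev CoeffRing : Type := Polynomial (LaurentPolynomial ℂ)

/-- The derivation `∂ = d/dx` on `ℂ[ε, ε^{−1}][x]` (so `∂(x) = 1` and `∂(ε) = 0`). -/
noncomputable def Dx : Derivation ℚ CoeffRing CoeffRing where
  toFun := Polynomial.derivative
  map_add' := by simp
  map_smul' := by intro q p; simp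
  map_one_eq_zero' := by simp
  leibniz' := by
    intro a b
    show Polynomial.derivative (a * b) = a • Polynomial.derivative b + b • Polynomial.derivative a
    simp only [Polynomial.derivative_mul, smul_eq_mul]
    ring

lemma genBinom_zero_right (k : ℤ) : genBinom k 0 = 1 := by simp [genBinom]

lemma genBinom_one_one : genBinom 1 1 = 1 := by simp [genBinom]

lemma genBinom_one_left_eq_zero {l : ℕ} (hl : 2 ≤ l) : genBinom 1 l = 0 := by
  rw [genBinom, prod_eq_zero (mem_range.2 (show 1 < l by omega)) (by norm_num), zero_div]

lemma Derivation.iterate_map_one_eq_zero (D : Derivation ℚ R R) {l : ℕ} (hl : 1 ≤ l) :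
    (⇑D)^[l] (1 : R) = 0 := by
  obtain ⟨t, rfl⟩ := Nat.exists_eq_add_of_le' hl
  rw [Function.iterate_succ_apply, Derivation.map_one_eq_zero, iterate_map_zero]

/-- The Leibniz-rule sum for the coefficient of `∂ₓ^n` in `A ∘ B`, truncated to orders `≤ a` in `A`
and `≤ b` in `B`. -/
noncomputable def compSum (D : Derivation ℚ R R) (A B : PDO R) (a b n : ℤ) : R :=
  ∑ k ∈ Icc (n - b) a, ∑ l ∈ range (k - n + b + 1).toNat,
    A.coeff k * (genBinom k l • (⇑D)^[l] (B.coeff (n - k + l)))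

section compSum

variable (D : Derivation ℚ R R) (A B : PDO R)

lemma pdoCompCoeff_eq_compSum_bound (n : ℤ) :
    pdoCompCoeff D A B n = compSum D A B A.bound B.bound n := by
  unfold pdoCompCoeff compSum
  refine sum_nbij' (fun p => n - B.bound + (p : ℤ)) (fun k => (k - n + B.bound).toNat)
    (fun p hp => ?_) (fun k hk => ?_) (fun p _ => by omega) (fun k hk => ?_) (fun p _ => ?_)
  · rw [mem_range, Int.lt_toNat] at hp
    rw [mem_Icc]
    omega
  · rw [mem_Icc] at hk
    rw [mem_range, Int.lt_toNat]
    omega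
  · rw [mem_Icc] at hk
    omega
  · have hp : n - B.bound + (p : ℤ) - n + B.bound + 1 = ((p + 1 : ℕ) : ℤ) := by push_cast; ring
    rw [hp, Int.toNat_natCast]
    refine sum_congr rfl fun l _ => ?_
    congr 4
    ring

variable {D A B}

lemma compSum_eq_of_le_left {a a' : ℤ} (b n : ℤ) (haa' : a ≤ a')
    (hA : ∀ k, a < k → k ≤ a' → A.coeff k = 0) :
    compSum D A B a b n = compSum D A B a' b n := by
  refine sum_subset (Icc_subset_Icc le_rfl haa') fun k hk hka => sum_eq_zero fun l _ => ?_
  rw [mem_Icc] at hk hka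
  rw [hA k (by omega) hk.2, zero_mul]

lemma compSum_eq_of_le_right (a : ℤ) {b b' : ℤ} (n : ℤ) (hbb' : b ≤ b')
    (hB : ∀ j, b < j → B.coeff j = 0) :
    compSum D A B a b n = compSum D A B a b' n := by
  have hvanish : ∀ k (l : ℕ), b < n - k + l →
      A.coeff k * (genBinom k l • (⇑D)^[l] (B.coeff (n - k + l))) = 0 := fun k l h => by
    rw [hB _ h, iterate_map_zero, smul_zero, mul_zero]
  unfold compSum
  rw [← sum_subset (Icc_subset_Icc (show n - b' ≤ n - b by omega) le_rfl) fun k hk hkb =>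
    sum_eq_zero fun l _ => hvanish k l (by rw [mem_Icc] at hk hkb; omega)]
  refine sum_congr rfl fun k hk => sum_subset (range_subset_range.2 ?_) fun l _ hl => ?_
  · rw [mem_Icc] at hk
    omega
  · rw [mem_range, Int.lt_toNat, not_lt] at hl
    exact hvanish k l (by omega)

lemma pdoCompCoeff_eq_compSum {a b : ℤ} (hA : ∀ k, a < k → A.coeff k = 0)
    (hB : ∀ j, b < j → B.coeff j = 0) (n : ℤ) :
    pdoCompCoeff D A B n = compSum D A B a b n := by
  rw [pdoCompCoeff_eq_compSum_bound, compSum_eq_of_le_left _ _ (le_max_right a A.bound)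
      (fun k hk _ => A.coeff_eq_zero k hk), compSum_eq_of_le_right _ _ (le_max_right b B.bound)
      B.coeff_eq_zero, compSum_eq_of_le_left _ _ (le_max_left a A.bound)
      (fun k hk _ => hA k hk), compSum_eq_of_le_right _ _ (le_max_left b B.bound) hB]

lemma compSum_of_lt {a b n : ℤ} (h : a < n - b) : compSum D A B a b n = 0 := by
  rw [compSum, Icc_eq_empty (by omega), sum_empty]

lemma compSum_eq_compSum_sub_one_add {a b n : ℤ} (h : n - b ≤ a) :
    compSum D A B a b n = compSum D A B (a - 1) b n +
      ∑ l ∈ range (a - n + b + 1).toNat,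
        A.coeff a * (genBinom a l • (⇑D)^[l] (B.coeff (n - a + l))) := by
  conv_lhs => rw [compSum, ← sub_add_cancel a 1,
    ← insert_Icc_right_eq_Icc_add_one (by omega), sum_insert (by simp), sub_add_cancel]
  rw [add_comm, compSum]

/-- The leading part `∂ₓ` of `A` contributes `∂ₓ ∘ B = B ∂ₓ + B'`. -/
lemma pdoCompCoeff_of_order_one {m : ℤ} (hA1 : A.coeff 1 = 1) (hA : ∀ k, 1 < k → A.coeff k = 0)
    (hB : ∀ j, m < j → B.coeff j = 0) (n : ℤ) :
    pdoCompCoeff D A B n = B.coeff (n - 1) + D (B.coeff n) + compSum D A B 0 m n := by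
  have hB' : ∀ j, max m n < j → B.coeff j = 0 := fun j hj => hB j (by omega)
  rw [pdoCompCoeff_eq_compSum hA hB', compSum_eq_of_le_right 0 n (le_max_left m n) hB,
    compSum_eq_compSum_sub_one_add (by omega), sub_self, hA1, add_comm]
  congr 1
  rw [sum_eq_add_of_mem 0 1 (by rw [mem_range]; omega) (by rw [mem_range]; omega) zero_ne_one
    fun l _ hl => by rw [genBinom_one_left_eq_zero (by omega), zero_smul, mul_zero]]
  simp [genBinom_zero_right, genBinom_one_one]

end compSum

def AgreesWithDeltaFrom (P : PDO R) (m k : ℤ) : Prop :=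
  ∀ j, k ≤ j → P.coeff j = (pdoDelta m : PDO R).coeff j

namespace AgreesWithDeltaFrom

variable {S : Type*} [CommRing S] {P : PDO S} {m k : ℤ}

lemma coeff_eq_ite (hP : AgreesWithDeltaFrom P m k) {j : ℤ} (hj : k ≤ j) :
    P.coeff j = if j = m then 1 else 0 :=
  hP j hj

lemma coeff_self (hP : AgreesWithDeltaFrom P m k) (hkm : k ≤ m) : P.coeff m = 1 := by
  rw [hP.coeff_eq_ite hkm, if_pos rfl]

lemma coeff_eq_zero_of_lt (hP : AgreesWithDeltaFrom P m k) (hkm : k ≤ m) {j : ℤ} (hj : m < j) :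
    P.coeff j = 0 := by
  rw [hP.coeff_eq_ite (by omega), if_neg (by omega)]

lemma iterate_derivation_coeff [Algebra ℚ S] (hP : AgreesWithDeltaFrom P m k)
    (D : Derivation ℚ S S) {j : ℤ} (hj : k ≤ j) {l : ℕ} (hl : 1 ≤ l) :
    (⇑D)^[l] (P.coeff j) = 0 := by
  rw [hP.coeff_eq_ite hj]
  split_ifs
  · exact D.iterate_map_one_eq_zero hl
  · exact iterate_map_zero D l

lemma sub_one (hP : AgreesWithDeltaFrom P m k) (hk : k - 1 ≠ m) (h : P.coeff (k - 1) = 0) :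
    AgreesWithDeltaFrom P m (k - 1) := by
  intro j hj
  rcases eq_or_lt_of_le hj with rfl | hj
  · rw [h]
    exact (if_neg hk).symm
  · exact hP j (by omega)

end AgreesWithDeltaFrom

section composition

variable {D : Derivation ℚ R R} {A P : PDO R} {s : ℕ} {m : ℤ}
  (hA : AgreesWithDeltaFrom A 1 (1 - s)) (hP : AgreesWithDeltaFrom P m (m - s))
include hA hP

lemma pdoCompCoeff_eq_add_compSum (n : ℤ) :
    pdoCompCoeff D A P n = P.coeff (n - 1) + D (P.coeff n) + compSum D A P (-s) m n := by
  rw [pdoCompCoeff_of_order_one (hA.coeff_eq_ite (by omega)) (fun k hk => hA.coeff_eq_zero_of_lt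
    (by omega) hk) (fun j hj => hP.coeff_eq_zero_of_lt (by omega) hj),
    ← compSum_eq_of_le_left (a := -s) m n (by omega) fun k hk hk0 => by
      rw [hA.coeff_eq_ite (by omega), if_neg (by omega)]]

lemma AgreesWithDeltaFrom.pdoComp : AgreesWithDeltaFrom (pdoComp D A P) (m + 1) (m + 1 - s) := by
  intro j hj
  change pdoCompCoeff D A P j = _
  rw [pdoCompCoeff_eq_add_compSum hA hP, compSum_of_lt (by omega),
    ← Function.iterate_one D, hP.iterate_derivation_coeff D (by omega) le_rfl,
    hP.coeff_eq_ite (by omega)]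
  simp [pdoDelta, sub_eq_iff_eq_add]

lemma pdoComp_coeff_sub_gap :
    (pdoComp D A P).coeff (m - s) = P.coeff (m - s - 1) + A.coeff (-s) := by
  change pdoCompCoeff D A P _ = _
  rw [pdoCompCoeff_eq_add_compSum hA hP, ← Function.iterate_one D,
    hP.iterate_derivation_coeff D le_rfl le_rfl, compSum_eq_compSum_sub_one_add (by omega),
    compSum_of_lt (by omega)]
  have h1 : (-(s : ℤ) - (m - s) + m + 1).toNat = 1 := by omega
  rw [h1, sum_range_one, show m - s - -s + ((0 : ℕ) : ℤ) = m by push_cast; ring,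
    hP.coeff_self (by omega)]
  simp [genBinom_zero_right]

lemma pdoComp_coeff_sub_gap_sub_one (hs : 1 ≤ s) :
    (pdoComp D A P).coeff (m - s - 1) =
      P.coeff (m - s - 2) + D (P.coeff (m - s - 1)) + A.coeff (-s - 1) := by
  change pdoCompCoeff D A P _ = _
  rw [pdoCompCoeff_eq_add_compSum hA hP, compSum_eq_compSum_sub_one_add (by omega),
    compSum_eq_compSum_sub_one_add (by omega), compSum_of_lt (by omega),
    show (-(s : ℤ) - (m - s - 1) + m + 1).toNat = 2 by omega,
    show (-(s : ℤ) - 1 - (m - s - 1) + m + 1).toNat = 1 by omega]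
  have hPm1 : P.coeff (m - 1) = 0 := by rw [hP.coeff_eq_ite (by omega), if_neg (by omega)]
  simp only [show m - s - 1 - 1 = m - s - 2 by ring,
    show m - s - 1 - (-s - 1) + ((0 : ℕ) : ℤ) = m by push_cast; ring,
    show m - s - 1 - -s + ((0 : ℕ) : ℤ) = m - 1 by push_cast; ring,
    show m - s - 1 - -s + ((1 : ℕ) : ℤ) = m by push_cast; ring, hP.coeff_self (by omega), hPm1,
    D.iterate_map_one_eq_zero le_rfl, sum_range_succ, sum_range_zero, genBinom_zero_right,
    Function.iterate_zero_apply, one_smul, smul_zero, mul_one, mul_zero, zero_add, add_zero]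

end composition

section power

variable {D : Derivation ℚ R R} {B : PDO R} {s : ℕ} (hB : AgreesWithDeltaFrom B 1 (1 - s))
include hB

lemma AgreesWithDeltaFrom.pdoNpow (m : ℕ) : AgreesWithDeltaFrom (pdoNpow D B m) m (m - s) := by
  induction m with
  | zero => exact fun j _ => rfl
  | succ m ih =>
    rw [Nat.cast_succ]
    exact hB.pdoComp ih

lemma pdoNpow_coeff_sub_gap (m : ℕ) : (pdoNpow D B m).coeff (m - s - 1) = m • B.coeff (-s) := by
  induction m with
  | zero =>
    change (if _ = (0 : ℤ) then 1 else 0) = _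
    rw [if_neg (by omega), zero_smul]
  | succ m ih =>
    change (pdoComp D B (pdoNpow D B m)).coeff _ = _
    rw [show ((m + 1 : ℕ) : ℤ) - s - 1 = m - s by push_cast; ring,
      pdoComp_coeff_sub_gap hB (hB.pdoNpow m), ih, succ_nsmul]

lemma pdoNpow_coeff_sub_gap_sub_one (hs : 1 ≤ s) (m : ℕ) :
    (pdoNpow D B m).coeff (m - s - 2) = m • B.coeff (-s - 1) + m.choose 2 • D (B.coeff (-s)) := by
  induction m with
  | zero =>
    change (if _ = (0 : ℤ) then 1 else 0) = _
    rw [if_neg (by omega), zero_smul, Nat.choose_zero_succ, zero_smul, add_zero]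
  | succ m ih =>
    change (pdoComp D B (pdoNpow D B m)).coeff _ = _
    rw [show ((m + 1 : ℕ) : ℤ) - s - 2 = m - s - 1 by push_cast; ring,
      pdoComp_coeff_sub_gap_sub_one hB (hB.pdoNpow m) hs, ih, pdoNpow_coeff_sub_gap hB,
      map_nsmul, Nat.choose_succ_succ', Nat.choose_one_right, succ_nsmul, add_nsmul]
    abel

end power

lemma agreesWithDeltaFrom_of_pdoNpow {D : Derivation ℚ R R} {B : PDO R} {r s : ℕ} (hsr : s < r)
    (hB : AgreesWithDeltaFrom B 1 1)
    (hBr : ∀ j : ℤ, 0 < j → j < r → (pdoNpow D B r).coeff j = 0) :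
    AgreesWithDeltaFrom B 1 (1 - s) := by
  induction s with
  | zero => simpa using hB
  | succ s ih =>
    have hgap := ih (by omega)
    have hcoeff : B.coeff (1 - s - 1) = 0 := by
      have h := pdoNpow_coeff_sub_gap (D := D) hgap r
      rw [hBr _ (by omega) (by omega), eq_comm, ← Nat.cast_smul_eq_nsmul ℚ, smul_eq_zero] at h
      rw [show (1 : ℤ) - s - 1 = -s by ring]
      exact h.resolve_left (by exact_mod_cast (by omega : r ≠ 0))
    rw [Nat.cast_succ, ← sub_sub]
    exact hgap.sub_one (by omega) hcoeff

open LaurentPolynomial Polynomial in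
theorem initial_condition_root_coeffs_general (r : ℕ) (hr : 2 ≤ r)
    (L : PDO CoeffRing)
    (hL0 : L.coeff 0 = Polynomial.C ((r : ℂ) • LaurentPolynomial.T (-(r : ℤ))) * Polynomial.X)
    (hLother : ∀ n : ℤ, n ≠ (r : ℤ) → n ≠ 0 → L.coeff n = 0)
    (B : PDO CoeffRing)
    (hB1 : B.coeff 1 = 1) (hBtop : ∀ n : ℤ, 1 < n → B.coeff n = 0)
    (hBr : (pdoNpow Dx B r).coeff = L.coeff) :
    B.coeff 0 = 0 ∧
    (∀ n : ℕ, 1 ≤ n → n ≤ r - 2 → B.coeff (-(n : ℤ)) = 0) ∧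
    B.coeff (-((r : ℤ) - 1)) = Polynomial.C (LaurentPolynomial.T (-(r : ℤ))) * Polynomial.X ∧
    B.coeff (-(r : ℤ)) = Polynomial.C ((-(((r : ℂ) - 1) / 2)) • LaurentPolynomial.T (-(r : ℤ))) := by
  have hB : AgreesWithDeltaFrom B 1 1 := fun j hj => by
    rcases eq_or_lt_of_le hj with rfl | hj
    · exact hB1
    · exact (hBtop j hj).trans (if_neg (by omega)).symm
  set s := r - 1 with hs
  have hgap : AgreesWithDeltaFrom B 1 (1 - s) :=
    agreesWithDeltaFrom_of_pdoNpow (r := r) (by omega) hB fun j hj hjr => by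
      rw [hBr, hLother j (by omega) (by omega)]
  have h0 := pdoNpow_coeff_sub_gap (D := Dx) hgap r
  have h1 := pdoNpow_coeff_sub_gap_sub_one (D := Dx) hgap (by omega) r
  rw [hBr, show (r : ℤ) - s - 1 = 0 by omega, hL0] at h0
  rw [hBr, show (r : ℤ) - s - 2 = -1 by omega, hLother _ (by omega) (by omega)] at h1
  have hr0 : (r : ℂ) ≠ 0 := by exact_mod_cast (by omega : r ≠ 0)
  have hb : B.coeff (-s) = Polynomial.C (T (-(r : ℤ))) * X := by
    apply smul_right_injective CoeffRing hr0
    simp only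
    rw [Nat.cast_smul_eq_nsmul, ← h0, ← smul_C, smul_mul_assoc, Nat.cast_smul_eq_nsmul]
  rw [show -(s : ℤ) - 1 = -r by omega, hb, show Dx (Polynomial.C (T (-(r : ℤ))) * X) =
    Polynomial.C (T (-(r : ℤ))) from derivative_C_mul_X _] at h1
  refine ⟨hgap.coeff_eq_ite (by omega), fun n hn1 hn2 => ?_, ?_, ?_⟩
  · rw [hgap.coeff_eq_ite (by omega), if_neg (by omega)]
  · rwa [show -((r : ℤ) - 1) = -s by omega]
  · apply smul_right_injective CoeffRing hr0
    simp only
    rw [Nat.cast_smul_eq_nsmul, eq_neg_of_add_eq_zero_left h1.symm, ← map_nsmul, ← map_neg,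
      smul_C, smul_smul, ← Nat.cast_smul_eq_nsmul ℂ, ← neg_smul, Nat.cast_choose_two]
    congr 2
    ring

open LaurentPolynomial Polynomial in
/-- Let `r ≥ 2` and let `L = ∂ₓ^r + ε^{−r} r x` over the differential
ring `ℂ[ε, ε^{−1}][x]` with `∂(x) = 1`.  Then any `r`-th root
`L^{1/r} = ∂ₓ + Σ_{n ≥ 0} bₙ ∂ₓ^{−n}` (it is unique) satisfies `b₀ = 0`,
`b₁ = ⋯ = b_{r−2} = 0`, `b_{r−1} = ε^{−r} x`, and `b_r = −((r−1)/2) ε^{−r}`. -/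
theorem initial_condition_root_coeffs (r : ℕ) (hr : 2 ≤ r)
    (L : PDO CoeffRing)
    (hLr : L.coeff (r : ℤ) = 1)
    (hL0 : L.coeff 0 = Polynomial.C ((r : ℂ) • LaurentPolynomial.T (-(r : ℤ))) * Polynomial.X)
    (hLother : ∀ n : ℤ, n ≠ (r : ℤ) → n ≠ 0 → L.coeff n = 0)
    (B : PDO CoeffRing)
    (hB1 : B.coeff 1 = 1) (hBtop : ∀ n : ℤ, 1 < n → B.coeff n = 0)
    (hBr : (pdoNpow Dx B r).coeff = L.coeff) :
    B.coeff 0 = 0 ∧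
    (∀ n : ℕ, 1 ≤ n → n ≤ r - 2 → B.coeff (-(n : ℤ)) = 0) ∧
    B.coeff (-((r : ℤ) - 1)) = Polynomial.C (LaurentPolynomial.T (-(r : ℤ))) * Polynomial.X ∧
    B.coeff (-(r : ℤ)) = Polynomial.C ((-(((r : ℂ) - 1) / 2)) • LaurentPolynomial.T (-(r : ℤ))) :=
  initial_condition_root_coeffs_general r hr L hL0 hLother B hB1 hBtop hBr
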